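/- arXiv:2605.13891 — 7 statements merged into one kernel-verified Lean document; each statement's English description precedes it below -/
import Mathlib

section
/- Let n ≥ 1, let x ∈ ℂⁿ be nonzero and y ∈ ℂⁿ. Then (a) there exists a Hermitian matrix H ∈ ℂ^{n×n} with Hx = y if and only if x*y is real (Im(x*y) = 0); and (b) if x*y is real, then every Hermitian H with Hx = y satisfies ‖H‖ ≥ ‖y‖/‖x‖, and there exists a Hermitian H with Hx = y and ‖H‖ = ‖y‖/‖x‖; that is, min{‖H‖ : H ∈ ℂ^{n×n}, H* = H, Hx = y} = ‖y‖/‖x‖. -/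
open Matrix
open scoped ComplexOrder ENNReal

noncomputable section

/-- Euclidean norm of a complex vector. -/
def vecNorm {ι : Type*} [Fintype ι] (x : ι → ℂ) : ℝ :=
  Real.sqrt (∑ i, Complex.normSq (x i))

/-- Spectral norm (largest singular value; the ℓ²→ℓ² operator norm). -/
def specNorm {ι κ : Type*} [Fintype ι] [Fintype κ] [DecidableEq κ] (A : Matrix ι κ ℂ) : ℝ :=
  ‖(Matrix.toEuclideanLin A).toContinuousLinearMap‖

/-!
A Hermitian `H` makes `x* H x` real and satisfies `‖H x‖ ≤ ‖H‖ ‖x‖`, which gives necessity and the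
lower bound. Conversely, if `x* y` is real and `y ≠ 0`, the rescaled vector `w = (‖x‖ / ‖y‖) y` has
the norm of `x` and `x* w` is real, so `x + w ⟂ x - w` and the Householder reflection in
`(x - w)ᗮ` is a Hermitian isometry sending `x` to `w`; its multiple by `‖y‖ / ‖x‖` sends `x` to `y`
and has norm exactly `‖y‖ / ‖x‖`.
-/

open scoped InnerProductSpace

section InnerProductSpace

variable {𝕜 E : Type*} [RCLike 𝕜] [NormedAddCommGroup E] [InnerProductSpace 𝕜 E]

namespace Submodule

theorem reflection_sub_of_im_inner_eq_zero {v w : E} (hnorm : ‖v‖ = ‖w‖)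
    (him : RCLike.im ⟪v, w⟫_𝕜 = 0) : reflection (𝕜 ∙ (v - w))ᗮ v = w := by
  set R : E ≃ₗᵢ[𝕜] E := reflection (𝕜 ∙ (v - w))ᗮ
  suffices R v + R v = w + w by
    apply smul_right_injective E (by simp : (2 : 𝕜) ≠ 0)
    simpa [two_smul] using this
  have h₁ : R (v - w) = -(v - w) := reflection_orthogonalComplement_singleton_eq_neg (v - w)
  have h₂ : R (v + w) = v + w := by
    apply reflection_mem_subspace_eq_self
    rw [mem_orthogonal_singleton_iff_inner_left]
    have hsym : ⟪w, v⟫_𝕜 = ⟪v, w⟫_𝕜 := by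
      rw [← inner_conj_symm, RCLike.conj_eq_iff_im.mpr him]
    rw [inner_add_left, inner_sub_right, inner_sub_right, hsym, inner_self_eq_norm_sq_to_K,
      inner_self_eq_norm_sq_to_K, hnorm]
    ring
  convert congr_arg₂ (· + ·) h₂ h₁ using 1
  · simp
  · abel

end Submodule

namespace LinearIsometryEquiv

theorem isSymmetric_of_involutive {f : E ≃ₗᵢ[𝕜] E} (hf : Function.Involutive f) :
    (f : E →ₗ[𝕜] E).IsSymmetric := fun x y => by
  change ⟪f x, y⟫_𝕜 = ⟪x, f y⟫_𝕜
  conv_rhs => rw [← f.inner_map_map x (f y), hf y]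

end LinearIsometryEquiv

theorem exists_isSymmetric_apply_eq_and_norm_eq_div {x y : E} (hx : x ≠ 0)
    (him : RCLike.im ⟪x, y⟫_𝕜 = 0) :
    ∃ T : E →L[𝕜] E, (T : E →ₗ[𝕜] E).IsSymmetric ∧ T x = y ∧ ‖T‖ = ‖y‖ / ‖x‖ := by
  rcases eq_or_ne y 0 with rfl | hy
  · exact ⟨0, fun _ _ => by simp, rfl, by simp⟩
  have : Nontrivial E := ⟨x, 0, hx⟩
  set c : ℝ := ‖y‖ / ‖x‖ with hc_def
  have hc : 0 < c := div_pos (norm_pos_iff.mpr hy) (norm_pos_iff.mpr hx)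
  set w : E := (c⁻¹ : 𝕜) • y
  have hw : ‖x‖ = ‖w‖ := by
    rw [norm_smul, norm_inv, RCLike.norm_ofReal, abs_of_pos hc, hc_def]
    field_simp
  have hxw : RCLike.im ⟪x, w⟫_𝕜 = 0 := by
    rw [inner_smul_right, ← RCLike.ofReal_inv, RCLike.im_ofReal_mul, him, mul_zero]
  set R : E ≃ₗᵢ[𝕜] E := Submodule.reflection (𝕜 ∙ (x - w))ᗮ
  refine ⟨(c : 𝕜) • R.toLinearIsometry.toContinuousLinearMap, ?_, ?_, ?_⟩
  · exact (LinearIsometryEquiv.isSymmetric_of_involutive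
      (Submodule.reflection_involutive _)).smul (RCLike.conj_ofReal c)
  · simp [R, Submodule.reflection_sub_of_im_inner_eq_zero hw hxw, w, smul_smul, hc.ne']
  · rw [norm_smul, LinearIsometry.norm_toContinuousLinearMap, mul_one, RCLike.norm_ofReal,
      abs_of_pos hc]

end InnerProductSpace

open WithLp

section Matrix

variable {ι : Type*} [Fintype ι]

theorem vecNorm_eq_norm_toLp (x : ι → ℂ) : vecNorm x = ‖toLp 2 x‖ := by
  simp [vecNorm, EuclideanSpace.norm_eq, Complex.normSq_eq_norm_sq]

theorem star_dotProduct_eq_inner (x y : ι → ℂ) : star x ⬝ᵥ y = ⟪toLp 2 x, toLp 2 y⟫_ℂ := by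
  rw [EuclideanSpace.inner_eq_star_dotProduct, dotProduct_comm]

variable [DecidableEq ι]

theorem specNorm_eq_norm_toEuclideanCLM (A : Matrix ι ι ℂ) :
    specNorm A = ‖toEuclideanCLM (n := ι) (𝕜 := ℂ) A‖ := rfl

theorem vecNorm_mulVec_le (A : Matrix ι ι ℂ) (x : ι → ℂ) :
    vecNorm (A *ᵥ x) ≤ specNorm A * vecNorm x := by
  simpa only [vecNorm_eq_norm_toLp, specNorm_eq_norm_toEuclideanCLM, toEuclideanCLM_toLp] using
    (toEuclideanCLM (n := ι) (𝕜 := ℂ) A).le_opNorm (toLp 2 x)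

theorem exists_isHermitian_mulVec_eq_and_specNorm_eq_div {x y : ι → ℂ} (hx : x ≠ 0)
    (him : (star x ⬝ᵥ y).im = 0) :
    ∃ H : Matrix ι ι ℂ, H.IsHermitian ∧ H *ᵥ x = y ∧ specNorm H = vecNorm y / vecNorm x := by
  rw [star_dotProduct_eq_inner] at him
  obtain ⟨T, hT, hTx, hTnorm⟩ :=
    exists_isSymmetric_apply_eq_and_norm_eq_div (𝕜 := ℂ) (x := toLp 2 x) (by simpa using hx) him
  refine ⟨(toEuclideanCLM (n := ι) (𝕜 := ℂ)).symm T, ?_, ?_, ?_⟩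
  · rw [← isSymmetric_toEuclideanLin_iff, ← coe_toEuclideanCLM_eq_toEuclideanLin,
      StarAlgEquiv.apply_symm_apply]
    exact hT
  · rw [← ofLp_toLp 2 x, ← ofLp_toEuclideanCLM, StarAlgEquiv.apply_symm_apply, hTx, ofLp_toLp]
  · rw [specNorm_eq_norm_toEuclideanCLM, StarAlgEquiv.apply_symm_apply, hTnorm,
      vecNorm_eq_norm_toLp, vecNorm_eq_norm_toLp]

end Matrix

theorem hermitian_mapping_general {n : ℕ} (x y : Fin n → ℂ) (hx : x ≠ 0) :
    ((∃ H : Matrix (Fin n) (Fin n) ℂ, H.IsHermitian ∧ H *ᵥ x = y) ↔ (star x ⬝ᵥ y).im = 0) ∧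
    ((star x ⬝ᵥ y).im = 0 →
      IsLeast {c : ℝ | ∃ H : Matrix (Fin n) (Fin n) ℂ,
          H.IsHermitian ∧ H *ᵥ x = y ∧ specNorm H = c}
        (vecNorm y / vecNorm x)) := by
  refine ⟨⟨fun ⟨H, hH, hHx⟩ => hHx ▸ hH.im_star_dotProduct_mulVec_self x, fun him => ?_⟩,
    fun him => ⟨exists_isHermitian_mulVec_eq_and_specNorm_eq_div hx him, ?_⟩⟩
  · obtain ⟨H, hH, hHx, -⟩ := exists_isHermitian_mulVec_eq_and_specNorm_eq_div hx him
    exact ⟨H, hH, hHx⟩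
  · rintro _ ⟨H, -, rfl, rfl⟩
    have hxpos : 0 < vecNorm x := by
      rw [vecNorm_eq_norm_toLp]
      simpa using hx
    exact (div_le_iff₀ hxpos).mpr (vecNorm_mulVec_le H x)

/-- Hermitian mapping problem: for `x ≠ 0`, there is a Hermitian `H` with
`H x = y` iff `x* y` is real, and in that case the minimum of `‖H‖` (spectral norm) over all
Hermitian `H` with `H x = y` is `‖y‖ / ‖x‖`. -/
theorem hermitian_mapping {n : ℕ} (hn : 1 ≤ n) (x y : Fin n → ℂ) (hx : x ≠ 0) :
    ((∃ H : Matrix (Fin n) (Fin n) ℂ, H.IsHermitian ∧ H *ᵥ x = y) ↔ (star x ⬝ᵥ y).im = 0) ∧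
    ((star x ⬝ᵥ y).im = 0 →
      IsLeast {c : ℝ | ∃ H : Matrix (Fin n) (Fin n) ℂ,
          H.IsHermitian ∧ H *ᵥ x = y ∧ specNorm H = c}
        (vecNorm y / vecNorm x)) :=
  hermitian_mapping_general x y hx
end
end

section
/- Let n ≥ 1, let x ∈ ℂⁿ be nonzero and y ∈ ℂⁿ. Then (a) there exists a skew-Hermitian matrix S ∈ ℂ^{n×n} (S* = −S) with Sx = y if and only if x*y is purely imaginary (Re(x*y) = 0); and (b) if Re(x*y) = 0, then every skew-Hermitian S with Sx = y satisfies ‖S‖ ≥ ‖y‖/‖x‖, and there exists a skew-Hermitian S with Sx = y and ‖S‖ = ‖y‖/‖x‖; that is, min{‖S‖ : S ∈ ℂ^{n×n}, S* = −S, Sx = y} = ‖y‖/‖x‖. -/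
/-!
If `re ⟪x, y⟫ = 0`, `y ≠ 0` and `a = i ‖y‖ / ‖x‖`, then `w = a⁻¹ y` has the norm of `x` and
`⟪x, w⟫` is real, so the Householder reflection `R` in `(x - w)ᗮ` maps `x` to `w`. Since `R` is a
self-adjoint isometry, `T = a R` is skew-adjoint, maps `x` to `y` and has norm `‖y‖ / ‖x‖`, which
is optimal because `‖y‖ ≤ ‖T‖ ‖x‖` for every solution. Conversely `⟪x, T x⟫` is purely imaginary
for every skew-adjoint `T`. Matrices become operators on Euclidean space via `toEuclideanCLM`.
-/

open Matrix
open scoped ComplexOrder ENNReal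

noncomputable section

open Submodule ComplexConjugate
open scoped InnerProductSpace

section RCLike

variable {𝕜 E : Type*} [RCLike 𝕜] [NormedAddCommGroup E] [InnerProductSpace 𝕜 E]

theorem Submodule.isSelfAdjoint_reflection [CompleteSpace E] (K : Submodule 𝕜 E)
    [K.HasOrthogonalProjection] : IsSelfAdjoint (K.reflection : E →L[𝕜] E) :=
  ContinuousLinearMap.isSelfAdjoint_iff_isSymmetric.mpr fun u v => by
    simpa using K.reflection.inner_map_map u (K.reflection v)

theorem Submodule.reflection_sub_of_norm_eq_of_conj_inner_eq {v w : E} (hnorm : ‖v‖ = ‖w‖)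
    (hreal : conj ⟪v, w⟫_𝕜 = ⟪v, w⟫_𝕜) : reflection (𝕜 ∙ (v - w))ᗮ v = w := by
  set R : E ≃ₗᵢ[𝕜] E := reflection (𝕜 ∙ (v - w))ᗮ
  suffices R v + R v = w + w by
    apply smul_right_injective E (by simp : (2 : 𝕜) ≠ 0)
    simpa [two_smul] using this
  have h_orth : ⟪v - w, v + w⟫_𝕜 = 0 := by
    rw [inner_sub_left, inner_add_right, inner_add_right, inner_self_eq_norm_sq_to_K,
      inner_self_eq_norm_sq_to_K, hnorm, ← inner_conj_symm w v, hreal]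
    ring
  have h₁ : R (v - w) = -(v - w) := reflection_orthogonalComplement_singleton_eq_neg (v - w)
  have h₂ : R (v + w) = v + w :=
    reflection_mem_subspace_eq_self (mem_orthogonal_singleton_iff_inner_right.mpr h_orth)
  convert! congr_arg₂ (· + ·) h₂ h₁ using 1
  · simp
  · abel

theorem re_inner_apply_self_eq_zero_of_star_eq_neg [CompleteSpace E] {T : E →L[𝕜] E}
    (hT : star T = -T) (x : E) : RCLike.re ⟪x, T x⟫_𝕜 = 0 := by
  have h : ⟪T x, x⟫_𝕜 = -⟪x, T x⟫_𝕜 := by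
    rw [← ContinuousLinearMap.adjoint_inner_right, ← ContinuousLinearMap.star_eq_adjoint, hT,
      _root_.neg_apply, inner_neg_right]
  have h_re := congrArg RCLike.re h
  rw [← inner_conj_symm, RCLike.conj_re, map_neg] at h_re
  linarith

end RCLike

section Complex

variable {E : Type*} [NormedAddCommGroup E] [InnerProductSpace ℂ E] [CompleteSpace E]

theorem exists_star_eq_neg_apply_eq_norm_le {x y : E} (hx : x ≠ 0) (h : (⟪x, y⟫_ℂ).re = 0) :
    ∃ T : E →L[ℂ] E, star T = -T ∧ T x = y ∧ ‖T‖ ≤ ‖y‖ / ‖x‖ := by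
  rcases eq_or_ne y 0 with rfl | hy
  · exact ⟨0, by simp, by simp, by simp⟩
  set a : ℂ := Complex.I * (‖y‖ / ‖x‖ : ℝ) with ha
  have ha0 : a ≠ 0 := by simp [ha, hx, hy]
  have hnorm_a : ‖a‖ = ‖y‖ / ‖x‖ := by simp [ha]
  set w : E := a⁻¹ • y
  have hnorm_w : ‖x‖ = ‖w‖ := by
    rw [norm_smul, norm_inv, hnorm_a]
    field_simp [norm_ne_zero_iff.mpr hx]
  have hreal : conj ⟪x, w⟫_ℂ = ⟪x, w⟫_ℂ := by
    rw [Complex.conj_eq_iff_im]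
    simp [w, inner_smul_right, ha, h]
  let R := reflection (ℂ ∙ (x - w))ᗮ
  have hR : star (R : E →L[ℂ] E) = R := (isSelfAdjoint_reflection _).star_eq
  refine ⟨a • (R : E →L[ℂ] E), ?_, ?_, ?_⟩
  · rw [star_smul, hR, ← neg_smul, ha]
    simp
  · simp [R, reflection_sub_of_norm_eq_of_conj_inner_eq hnorm_w hreal, w, smul_smul, ha0]
  · calc ‖a • (R : E →L[ℂ] E)‖ ≤ ‖a‖ * 1 := (norm_smul_le _ _).trans <|
          mul_le_mul_of_nonneg_left R.toLinearIsometry.norm_toContinuousLinearMap_le (norm_nonneg a)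
      _ = ‖y‖ / ‖x‖ := by rw [mul_one, hnorm_a]

theorem exists_star_eq_neg_apply_eq_iff {x y : E} (hx : x ≠ 0) :
    (∃ T : E →L[ℂ] E, star T = -T ∧ T x = y) ↔ (⟪x, y⟫_ℂ).re = 0 := by
  refine ⟨?_, fun h => ?_⟩
  · rintro ⟨T, hT, rfl⟩
    exact re_inner_apply_self_eq_zero_of_star_eq_neg hT x
  · obtain ⟨T, hT, hTx, -⟩ := exists_star_eq_neg_apply_eq_norm_le hx h
    exact ⟨T, hT, hTx⟩

theorem isLeast_norm_star_eq_neg_apply_eq {x y : E} (hx : x ≠ 0) (h : (⟪x, y⟫_ℂ).re = 0) :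
    IsLeast {c : ℝ | ∃ T : E →L[ℂ] E, star T = -T ∧ T x = y ∧ ‖T‖ = c} (‖y‖ / ‖x‖) := by
  have lower {T : E →L[ℂ] E} (hTx : T x = y) : ‖y‖ / ‖x‖ ≤ ‖T‖ :=
    div_le_of_le_mul₀ (norm_nonneg x) (norm_nonneg T) (hTx ▸ T.le_opNorm x)
  obtain ⟨T, hT, hTx, hle⟩ := exists_star_eq_neg_apply_eq_norm_le hx h
  exact ⟨⟨T, hT, hTx, le_antisymm hle (lower hTx)⟩, fun _ ⟨_, _, hTx, hc⟩ => hc ▸ lower hTx⟩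

end Complex

theorem vecNorm_eq_norm_toLp_s1 {ι : Type*} [Fintype ι] (v : ι → ℂ) :
    vecNorm v = ‖WithLp.toLp 2 v‖ := by
  simp [vecNorm, EuclideanSpace.norm_eq, Complex.normSq_eq_norm_sq]

theorem skewHermitian_mapping_general {n : ℕ} (x y : Fin n → ℂ) (hx : x ≠ 0) :
    ((∃ S : Matrix (Fin n) (Fin n) ℂ, Sᴴ = -S ∧ S *ᵥ x = y) ↔ (star x ⬝ᵥ y).re = 0) ∧
    ((star x ⬝ᵥ y).re = 0 →
      IsLeast {c : ℝ | ∃ S : Matrix (Fin n) (Fin n) ℂ,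
          Sᴴ = -S ∧ S *ᵥ x = y ∧ specNorm S = c}
        (vecNorm y / vecNorm x)) := by
  let Φ := toEuclideanCLM (n := Fin n) (𝕜 := ℂ)
  have hskew (S : Matrix (Fin n) (Fin n) ℂ) : Sᴴ = -S ↔ star (Φ S) = -Φ S := by
    rw [← map_star, ← map_neg, (EquivLike.injective Φ).eq_iff, star_eq_conjTranspose]
  have hmap (S : Matrix (Fin n) (Fin n) ℂ) :
      S *ᵥ x = y ↔ Φ S (WithLp.toLp 2 x) = WithLp.toLp 2 y := by
    simp [Φ, (WithLp.toLp_injective 2).eq_iff]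
  have hnorm (S : Matrix (Fin n) (Fin n) ℂ) : specNorm S = ‖Φ S‖ := rfl
  have hinner : star x ⬝ᵥ y = ⟪WithLp.toLp 2 x, WithLp.toLp 2 y⟫_ℂ := dotProduct_comm _ _
  have hx' : WithLp.toLp 2 x ≠ 0 := by simpa using hx
  have h_exists := exists_star_eq_neg_apply_eq_iff (y := WithLp.toLp 2 y) hx'
  have h_least := isLeast_norm_star_eq_neg_apply_eq (y := WithLp.toLp 2 y) hx'
  simp only [Φ.surjective.exists] at h_exists h_least
  simp only [hskew, hmap, hnorm, hinner, vecNorm_eq_norm_toLp_s1]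
  exact ⟨h_exists, h_least⟩

/-- Skew-Hermitian mapping problem: for `x ≠ 0`, there is a skew-Hermitian `S`
(`Sᴴ = -S`) with `S x = y` iff `x* y` is purely imaginary, and in that case the minimum of
`‖S‖` (spectral norm) over all skew-Hermitian `S` with `S x = y` is `‖y‖ / ‖x‖`. -/
theorem skewHermitian_mapping {n : ℕ} (hn : 1 ≤ n) (x y : Fin n → ℂ) (hx : x ≠ 0) :
    ((∃ S : Matrix (Fin n) (Fin n) ℂ, Sᴴ = -S ∧ S *ᵥ x = y) ↔ (star x ⬝ᵥ y).re = 0) ∧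
    ((star x ⬝ᵥ y).re = 0 →
      IsLeast {c : ℝ | ∃ S : Matrix (Fin n) (Fin n) ℂ,
          Sᴴ = -S ∧ S *ᵥ x = y ∧ specNorm S = c}
        (vecNorm y / vecNorm x)) :=
  skewHermitian_mapping_general x y hx
end
end

section
/- Let n ≥ 1 and let x, y ∈ ℂⁿ both be nonzero. Then there exists a Hermitian positive semidefinite matrix H ∈ ℂ^{n×n} with Hx = y if and only if x*y is real and positive. Moreover, if x*y > 0, then min{‖H‖ : H ∈ ℂ^{n×n}, H Hermitian positive semidefinite, Hx = y} = ‖y‖²/(x*y), and the minimum is attained by the rank-one matrix H = (1/(x*y)) y y*, which is Hermitian positive semidefinite, satisfies Hx = y, and has spectral norm ‖y‖²/(x*y). -/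
/-!
If `H ≥ 0` and `H x = y ≠ 0`, then `x* y = x* H x ≥ 0`, and `x* H x = 0` would force `H x = 0`.
For the bound, view the matrices with the spectral norm as a C⋆-algebra: conjugating
`H ≤ ‖H‖` by `√H` gives `H² ≤ ‖H‖ H`, which evaluated at `x` reads `‖y‖² ≤ ‖H‖ (x* y)`.
The rank-one matrix `y y* / (x* y)` attains it because `‖y y*‖ = ‖y‖²`.
-/

open Matrix
open scoped ComplexOrder ENNReal

noncomputable section

open scoped MatrixOrder Matrix.Norms.L2Operator

lemma CStarAlgebra.mul_self_le_norm_smul_self {A : Type*} [CStarAlgebra A] [PartialOrder A]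
    [StarOrderedRing A] {a : A} (ha : 0 ≤ a) : a * a ≤ ‖a‖ • a := by
  set s := CFC.sqrt a
  have hs_star : star s = s := (CFC.sqrt_nonneg a).isSelfAdjoint.star_eq
  have hs : s * s = a := CFC.sqrt_mul_sqrt_self a ha
  clear_value s
  subst hs
  calc s * s * (s * s) = star s * (s * s) * s := by rw [hs_star]; simp only [mul_assoc]
    _ ≤ ‖s * s‖ • (star s * s) := star_left_conjugate_le_norm_smul ha.isSelfAdjoint
    _ = ‖s * s‖ • (s * s) := by rw [hs_star]

namespace Matrix

variable {ι : Type*} [Fintype ι]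

lemma vecNorm_eq_norm (u : ι → ℂ) : vecNorm u = ‖(WithLp.toLp 2 u : EuclideanSpace ℂ ι)‖ := by
  simp [vecNorm, EuclideanSpace.norm_eq, Complex.normSq_eq_norm_sq]

lemma star_dotProduct_self (u : ι → ℂ) : star u ⬝ᵥ u = ((vecNorm u ^ 2 : ℝ) : ℂ) := by
  rw [vecNorm_eq_norm, dotProduct_comm, ← EuclideanSpace.inner_toLp_toLp,
    inner_self_eq_norm_sq_to_K, Complex.ofReal_pow]
  rfl

lemma PosSemidef.dotProduct_mulVec_pos {H : Matrix ι ι ℂ} (hH : H.PosSemidef) {x : ι → ℂ}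
    (hx : H *ᵥ x ≠ 0) : 0 < star x ⬝ᵥ H *ᵥ x :=
  (hH.dotProduct_mulVec_nonneg x).lt_of_ne' ((hH.dotProduct_mulVec_zero_iff x).not.mpr hx)

lemma posSemidef_inv_smul_vecMulVec_self_star {c : ℂ} (hc : 0 < c) (y : ι → ℂ) :
    (c⁻¹ • vecMulVec y (star y)).PosSemidef :=
  (posSemidef_vecMulVec_self_star y).smul (inv_nonneg.mpr hc.le)

lemma inv_smul_vecMulVec_self_star_mulVec {x y : ι → ℂ} (hs : 0 < star x ⬝ᵥ y) :
    ((star x ⬝ᵥ y)⁻¹ • vecMulVec y (star y)) *ᵥ x = y := by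
  have hyx : star y ⬝ᵥ x = star x ⬝ᵥ y := by
    rw [← star_star (star y ⬝ᵥ x), star_dotProduct, star_star, hs.le.isSelfAdjoint.star_eq]
  rw [smul_mulVec, vecMulVec_mulVec, hyx, op_smul_eq_smul, smul_smul, inv_mul_cancel₀ hs.ne',
    one_smul]

variable [DecidableEq ι]

lemma specNorm_eq_norm (A : Matrix ι ι ℂ) : specNorm A = ‖A‖ := rfl

lemma norm_vecMulVec_self_star (y : ι → ℂ) : ‖vecMulVec y (star y)‖ = vecNorm y ^ 2 := by
  have hrank := InnerProductSpace.symm_toEuclideanLin_rankOne (𝕜 := ℂ) (WithLp.toLp 2 y)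
    (WithLp.toLp 2 y)
  rw [l2_opNorm_def, ← hrank, LinearEquiv.trans_apply, LinearEquiv.apply_symm_apply,
    (LinearMap.toContinuousLinearMap_eq_iff_eq_toLinearMap _ _).mpr rfl,
    InnerProductSpace.norm_rankOne, vecNorm_eq_norm, sq]

lemma PosSemidef.norm_mulVec_sq_le {H : Matrix ι ι ℂ} (hH : H.PosSemidef) (x : ι → ℂ) :
    vecNorm (H *ᵥ x) ^ 2 ≤ specNorm H * (star x ⬝ᵥ H *ᵥ x).re := by
  have hHH : star x ⬝ᵥ (H * H) *ᵥ x = star (H *ᵥ x) ⬝ᵥ H *ᵥ x := by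
    rw [← mulVec_mulVec, dotProduct_mulVec, star_mulVec, hH.isHermitian.eq]
  have hle := (Matrix.le_iff.mp <| CStarAlgebra.mul_self_le_norm_smul_self hH.nonneg
    ).dotProduct_mulVec_nonneg x
  rw [sub_mulVec, dotProduct_sub, smul_mulVec, dotProduct_smul, hHH, star_dotProduct_self,
    sub_nonneg] at hle
  simpa [specNorm_eq_norm, ← Complex.ofReal_pow] using Complex.re_le_re hle

lemma specNorm_inv_smul_vecMulVec_self_star {c : ℂ} (hc : 0 < c) (y : ι → ℂ) :
    specNorm (c⁻¹ • vecMulVec y (star y)) = vecNorm y ^ 2 / c.re := by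
  rw [specNorm_eq_norm, norm_smul, norm_vecMulVec_self_star, norm_inv,
    ← Complex.re_eq_norm.mpr hc.le]
  ring

end Matrix

theorem psd_mapping_general {n : ℕ} (x y : Fin n → ℂ) (hy : y ≠ 0) :
    ((∃ H : Matrix (Fin n) (Fin n) ℂ, H.PosSemidef ∧ H *ᵥ x = y) ↔
      ((star x ⬝ᵥ y).im = 0 ∧ 0 < (star x ⬝ᵥ y).re)) ∧
    ((star x ⬝ᵥ y).im = 0 → 0 < (star x ⬝ᵥ y).re →
      (IsLeast {c : ℝ | ∃ H : Matrix (Fin n) (Fin n) ℂ,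
          H.PosSemidef ∧ H *ᵥ x = y ∧ specNorm H = c}
        (vecNorm y ^ 2 / (star x ⬝ᵥ y).re) ∧
      ((star x ⬝ᵥ y)⁻¹ • Matrix.vecMulVec y (star y)).PosSemidef ∧
      ((star x ⬝ᵥ y)⁻¹ • Matrix.vecMulVec y (star y)) *ᵥ x = y ∧
      specNorm ((star x ⬝ᵥ y)⁻¹ • Matrix.vecMulVec y (star y)) =
        vecNorm y ^ 2 / (star x ⬝ᵥ y).re)) := by
  have hpos : (star x ⬝ᵥ y).im = 0 ∧ 0 < (star x ⬝ᵥ y).re ↔ 0 < star x ⬝ᵥ y := by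
    rw [Complex.pos_iff, eq_comm, and_comm]
  refine ⟨⟨?_, fun hs => ⟨_, posSemidef_inv_smul_vecMulVec_self_star (hpos.mp hs) y,
    inv_smul_vecMulVec_self_star_mulVec (hpos.mp hs)⟩⟩, fun him hre => ?_⟩
  · rintro ⟨H, hH, rfl⟩
    exact hpos.mpr (hH.dotProduct_mulVec_pos hy)
  have hs := hpos.mp ⟨him, hre⟩
  have hK := posSemidef_inv_smul_vecMulVec_self_star hs y
  have hKx := inv_smul_vecMulVec_self_star_mulVec hs
  have hKnorm := specNorm_inv_smul_vecMulVec_self_star hs y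
  refine ⟨⟨⟨_, hK, hKx, hKnorm⟩, ?_⟩, hK, hKx, hKnorm⟩
  rintro _ ⟨H, hH, rfl, rfl⟩
  rw [div_le_iff₀ hre]
  exact hH.norm_mulVec_sq_le x

/-- Positive semidefinite mapping problem: for nonzero `x, y`, there is a
Hermitian positive semidefinite `H` with `H x = y` iff `x* y` is real and positive; in that
case the minimum of `‖H‖` over all PSD `H` with `H x = y` is `‖y‖² / (x* y)`, attained by the
rank-one matrix `(1/(x* y)) y y*`. -/
theorem psd_mapping {n : ℕ} (hn : 1 ≤ n) (x y : Fin n → ℂ) (hx : x ≠ 0) (hy : y ≠ 0) :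
    ((∃ H : Matrix (Fin n) (Fin n) ℂ, H.PosSemidef ∧ H *ᵥ x = y) ↔
      ((star x ⬝ᵥ y).im = 0 ∧ 0 < (star x ⬝ᵥ y).re)) ∧
    ((star x ⬝ᵥ y).im = 0 → 0 < (star x ⬝ᵥ y).re →
      (IsLeast {c : ℝ | ∃ H : Matrix (Fin n) (Fin n) ℂ,
          H.PosSemidef ∧ H *ᵥ x = y ∧ specNorm H = c}
        (vecNorm y ^ 2 / (star x ⬝ᵥ y).re) ∧
      ((star x ⬝ᵥ y)⁻¹ • Matrix.vecMulVec y (star y)).PosSemidef ∧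
      ((star x ⬝ᵥ y)⁻¹ • Matrix.vecMulVec y (star y)) *ᵥ x = y ∧
      specNorm ((star x ⬝ᵥ y)⁻¹ • Matrix.vecMulVec y (star y)) =
        vecNorm y ^ 2 / (star x ⬝ᵥ y).re)) :=
  psd_mapping_general x y hy
end
end

section
/- Let (E,J,R) be a dH triple and suppose the pencil P(λ) = λE − (J − R) is regular, i.e. there exists μ ∈ ℂ with det(μE − (J − R)) ≠ 0. Then every λ₀ ∈ ℂ with det(λ₀E − (J − R)) = 0 satisfies Re(λ₀) ≤ 0. -/
open Matrix
open scoped ComplexOrder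

/-!
Take `v ≠ 0` with `λ E v = (J - R) v` and pair with `v`: `λ (v*Ev) = v*Jv - v*Rv`, where `v*Ev` and
`v*Rv` are nonnegative reals and `v*Jv` is purely imaginary, so `Re λ · v*Ev = -v*Rv ≤ 0`.
If `v*Ev > 0` this gives `Re λ ≤ 0`. If `v*Ev = 0`, then `Ev = 0` by semidefiniteness, so `v` is
annihilated by `μ E - (J - R)` for every `μ`, contradicting regularity.
-/

namespace Matrix

section Pencil

variable {ι A : Type*} [Fintype ι] [CommRing A] {E B : Matrix ι ι A} {v : ι → A}

lemma smul_sub_mulVec_eq_of_mulVec_eq_zero (hEv : E *ᵥ v = 0) (μ lam : A) :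
    (μ • E - B) *ᵥ v = (lam • E - B) *ᵥ v := by
  simp only [sub_mulVec, smul_mulVec, hEv, smul_zero]

lemma det_smul_sub_eq_zero_of_mulVec_eq_zero [DecidableEq ι] [IsDomain A] {lam : A}
    (hv : v ≠ 0) (hEv : E *ᵥ v = 0) (hker : (lam • E - B) *ᵥ v = 0) (μ : A) :
    (μ • E - B).det = 0 :=
  exists_mulVec_eq_zero_iff.mp
    ⟨v, hv, (smul_sub_mulVec_eq_of_mulVec_eq_zero hEv μ lam).trans hker⟩

end Pencil

variable {𝕜 ι : Type*} [RCLike 𝕜] [Fintype ι]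

lemma re_star_dotProduct_mulVec_self_eq_zero_of_conjTranspose_eq_neg {J : Matrix ι ι 𝕜}
    (hJ : Jᴴ = -J) (v : ι → 𝕜) : RCLike.re (star v ⬝ᵥ J *ᵥ v) = 0 := by
  have hstar : star (star v ⬝ᵥ J *ᵥ v) = -(star v ⬝ᵥ J *ᵥ v) := by
    conv_lhs => rw [star_dotProduct, star_star, star_mulVec, hJ]
    rw [vecMul_neg, neg_dotProduct, ← dotProduct_mulVec]
  have := congrArg RCLike.re hstar
  rw [RCLike.star_def, RCLike.conj_re, map_neg] at this
  linarith

lemma re_mul_re_star_dotProduct_mulVec_self {E J R : Matrix ι ι 𝕜} (hE : E.IsHermitian)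
    (hJ : Jᴴ = -J) {lam : 𝕜} {v : ι → 𝕜} (hker : (lam • E - (J - R)) *ᵥ v = 0) :
    RCLike.re lam * RCLike.re (star v ⬝ᵥ E *ᵥ v) = -RCLike.re (star v ⬝ᵥ R *ᵥ v) := by
  have hquad : lam * (star v ⬝ᵥ E *ᵥ v) = star v ⬝ᵥ J *ᵥ v - star v ⬝ᵥ R *ᵥ v := by
    have := congrArg (star v ⬝ᵥ ·) hker
    simpa only [sub_mulVec, smul_mulVec, dotProduct_sub, dotProduct_smul, smul_eq_mul,
      dotProduct_zero, sub_eq_zero] using this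
  have := congrArg RCLike.re hquad
  rwa [RCLike.mul_re, hE.im_star_dotProduct_mulVec_self, mul_zero, sub_zero, map_sub,
    re_star_dotProduct_mulVec_self_eq_zero_of_conjTranspose_eq_neg hJ, zero_sub] at this

end Matrix

/-- For a dH triple `(E, J, R)` whose pencil `λE − (J − R)` is regular, every
finite eigenvalue `λ₀` (i.e. `det(λ₀E − (J − R)) = 0`) satisfies `Re λ₀ ≤ 0`. -/
theorem dH_eigenvalues_left_halfplane {n : ℕ} (E J R : Matrix (Fin n) (Fin n) ℂ)
    (hE : E.PosSemidef) (hJ : Jᴴ = -J) (hR : R.PosSemidef)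
    (hreg : ∃ μ : ℂ, Matrix.det (μ • E - (J - R)) ≠ 0) :
    ∀ lam : ℂ, Matrix.det (lam • E - (J - R)) = 0 → lam.re ≤ 0 := by
  intro lam hdet
  obtain ⟨v, hv, hker⟩ := exists_mulVec_eq_zero_iff.mpr hdet
  obtain ⟨he_re, he_im⟩ := RCLike.nonneg_iff.mp (hE.dotProduct_mulVec_nonneg v)
  rcases he_re.lt_or_eq with he_pos | he_zero
  · refine nonpos_of_mul_nonpos_left ?_ he_pos
    exact (re_mul_re_star_dotProduct_mulVec_self hE.isHermitian hJ hker).trans_le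
      (neg_nonpos.mpr (RCLike.nonneg_iff.mp (hR.dotProduct_mulVec_nonneg v)).1)
  · have hEv : E *ᵥ v = 0 :=
      (hE.dotProduct_mulVec_zero_iff v).mp (RCLike.ext he_zero.symm he_im)
    obtain ⟨μ, hμ⟩ := hreg
    exact absurd (det_smul_sub_eq_zero_of_mulVec_eq_zero hv hEv hker μ) hμ
end

section
/- Let (E,J,R) be a dH triple, let ω ∈ ℝ be such that det(iωE − J) ≠ 0, and set M := (iωE − J)⁻¹. Let ΔE ∈ ℂ^{n×n} be Hermitian with E + ΔE positive semidefinite, ΔJ ∈ ℂ^{n×n} skew-Hermitian, and ΔR ∈ ℂ^{n×n} Hermitian with R + ΔR positive semidefinite. Then the following are equivalent: (1) det(iω(E+ΔE) − (J+ΔJ) + (R+ΔR)) = 0; (2) there exists a nonzero x ∈ ℂⁿ with (R+ΔR)x = 0 and (iω(E+ΔE) − (J+ΔJ))x = 0; (3) there exist v_E, v_J ∈ ℂⁿ such that v := −iω v_E + v_J ≠ 0, ΔR M v = −R M v, ΔE M v = v_E, and ΔJ M v = v_J. -/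
/-!
For `A := iω(E + ΔE) − (J + ΔJ)` skew-Hermitian and `S := R + ΔR` positive semidefinite, the
quadratic form of `A + S` at `x` has real part `x* S x ≥ 0`, so a kernel vector of `A + S` is
annihilated by both `S` and `A`. Writing `x = M v` with `M = (iωE − J)⁻¹`, the equation `A x = 0`
becomes `v = −iω ΔE M v + ΔJ M v`, which is the structured form with `v_E = ΔE x`, `v_J = ΔJ x`.
-/

open Matrix
open scoped ComplexOrder

noncomputable section

/-- `M(ω) = (iωE − J)⁻¹`. -/
def Mmat {n : ℕ} (E J : Matrix (Fin n) (Fin n) ℂ) (ω : ℝ) : Matrix (Fin n) (Fin n) ℂ :=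
  ((Complex.I * ω) • E - J)⁻¹

namespace Matrix

section SkewHermitianAddPosSemidef

variable {𝕜 ι : Type*} [RCLike 𝕜] [Fintype ι] {A S : Matrix ι ι 𝕜}

theorem re_star_dotProduct_mulVec_eq_zero_of_conjTranspose_eq_neg (hA : Aᴴ = -A) (v : ι → 𝕜) :
    RCLike.re (star v ⬝ᵥ A *ᵥ v) = 0 := by
  have hconj : star (star v ⬝ᵥ A *ᵥ v) = -(star v ⬝ᵥ A *ᵥ v) := by
    rw [← star_dotProduct, star_mulVec, ← dotProduct_mulVec, hA, neg_mulVec,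
      dotProduct_neg]
  have := congrArg RCLike.re hconj
  rw [RCLike.star_def, RCLike.conj_re, map_neg] at this
  linarith

theorem mulVec_eq_zero_of_add_mulVec_eq_zero (hA : Aᴴ = -A) (hS : S.PosSemidef) {v : ι → 𝕜}
    (h : (A + S) *ᵥ v = 0) : S *ᵥ v = 0 ∧ A *ᵥ v = 0 := by
  have hsum : star v ⬝ᵥ A *ᵥ v + star v ⬝ᵥ S *ᵥ v = 0 := by
    rw [← dotProduct_add, ← add_mulVec, h, dotProduct_zero]
  obtain ⟨hre_nonneg, him⟩ := RCLike.nonneg_iff.mp (hS.dotProduct_mulVec_nonneg v)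
  have hre : RCLike.re (star v ⬝ᵥ S *ᵥ v) = 0 := by
    have := congrArg RCLike.re hsum
    rw [map_add, re_star_dotProduct_mulVec_eq_zero_of_conjTranspose_eq_neg hA, map_zero] at this
    linarith
  have hSv : S *ᵥ v = 0 :=
    (hS.dotProduct_mulVec_zero_iff v).mp (RCLike.ext (by simpa using hre) (by simpa using him))
  refine ⟨hSv, ?_⟩
  rwa [add_mulVec, hSv, add_zero] at h

theorem det_add_eq_zero_iff_of_conjTranspose_eq_neg [DecidableEq ι] (hA : Aᴴ = -A)
    (hS : S.PosSemidef) :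
    (A + S).det = 0 ↔ ∃ x : ι → 𝕜, x ≠ 0 ∧ S *ᵥ x = 0 ∧ A *ᵥ x = 0 := by
  rw [← exists_mulVec_eq_zero_iff]
  constructor
  · rintro ⟨x, hx, hker⟩
    exact ⟨x, hx, mulVec_eq_zero_of_add_mulVec_eq_zero hA hS hker⟩
  · rintro ⟨x, hx, hSx, hAx⟩
    exact ⟨x, hx, by rw [add_mulVec, hAx, hSx, add_zero]⟩

end SkewHermitianAddPosSemidef

theorem conjTranspose_I_mul_ofReal_smul_sub {ι : Type*} {E J : Matrix ι ι ℂ} (hE : Eᴴ = E)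
    (hJ : Jᴴ = -J) (ω : ℝ) :
    ((Complex.I * ω) • E - J)ᴴ = -((Complex.I * ω) • E - J) := by
  have hstar : star (Complex.I * ω) = -(Complex.I * ω) := by simp
  rw [conjTranspose_sub, conjTranspose_smul, hE, hJ, hstar]
  module

section StructuredPerturbation

variable {K ι : Type*} [CommRing K] [Fintype ι] [DecidableEq ι]

theorem exists_ne_zero_iff_exists_nonsing_inv_mulVec {B : Matrix ι ι K} (hB : IsUnit B.det)
    (P : (ι → K) → Prop) :
    (∃ x, x ≠ 0 ∧ P x) ↔ ∃ v, v ≠ 0 ∧ P (B⁻¹ *ᵥ v) := by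
  have hleft : ∀ x, B⁻¹ *ᵥ (B *ᵥ x) = x := fun x => by
    rw [mulVec_mulVec, nonsing_inv_mul B hB, one_mulVec]
  have hright : ∀ v, B *ᵥ (B⁻¹ *ᵥ v) = v := fun v => by
    rw [mulVec_mulVec, mul_nonsing_inv B hB, one_mulVec]
  constructor
  · rintro ⟨x, hx, hPx⟩
    refine ⟨B *ᵥ x, fun h => hx ?_, by rwa [hleft]⟩
    rw [← hleft x, h, mulVec_zero]
  · rintro ⟨v, hv, hPv⟩
    refine ⟨B⁻¹ *ᵥ v, fun h => hv ?_, hPv⟩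
    rw [← hright v, h, mulVec_zero]

theorem exists_kernel_vector_iff_exists_structured (c : K) (E J R ΔE ΔJ ΔR : Matrix ι ι K)
    (h : IsUnit (c • E - J).det) :
    (∃ x : ι → K, x ≠ 0 ∧ (R + ΔR) *ᵥ x = 0 ∧ (c • (E + ΔE) - (J + ΔJ)) *ᵥ x = 0) ↔
      ∃ vE vJ : ι → K,
        (-c) • vE + vJ ≠ 0 ∧
        ΔR *ᵥ (c • E - J)⁻¹ *ᵥ ((-c) • vE + vJ) = -(R *ᵥ (c • E - J)⁻¹ *ᵥ ((-c) • vE + vJ)) ∧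
        ΔE *ᵥ (c • E - J)⁻¹ *ᵥ ((-c) • vE + vJ) = vE ∧
        ΔJ *ᵥ (c • E - J)⁻¹ *ᵥ ((-c) • vE + vJ) = vJ := by
  rw [exists_ne_zero_iff_exists_nonsing_inv_mulVec h]
  set M := (c • E - J)⁻¹
  have hpencil : ∀ v, (c • (E + ΔE) - (J + ΔJ)) *ᵥ M *ᵥ v =
      v - ((-c) • ΔE *ᵥ M *ᵥ v + ΔJ *ᵥ M *ᵥ v) := fun v => by
    have hMv : (c • E - J) *ᵥ M *ᵥ v = v := by
      rw [mulVec_mulVec, mul_nonsing_inv _ h, one_mulVec]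
    rw [show c • (E + ΔE) - (J + ΔJ) = (c • E - J) + (c • ΔE - ΔJ) by module, add_mulVec, hMv,
      sub_mulVec, smul_mulVec]
    module
  have hR : ∀ y, (R + ΔR) *ᵥ y = 0 ↔ ΔR *ᵥ y = -(R *ᵥ y) := fun y => by
    rw [add_mulVec, add_comm, add_eq_zero_iff_eq_neg]
  simp only [hpencil, sub_eq_zero, hR]
  constructor
  · rintro ⟨v, hv, hRv, hv_eq⟩
    refine ⟨ΔE *ᵥ M *ᵥ v, ΔJ *ᵥ M *ᵥ v, ?_⟩
    rw [← hv_eq]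
    exact ⟨hv, hRv, rfl, rfl⟩
  · rintro ⟨vE, vJ, hw, hRw, hEw, hJw⟩
    exact ⟨_, hw, hRw, by rw [hEw, hJw]⟩

end StructuredPerturbation

end Matrix

theorem dH_imaginary_eigenvalue_tfae_general {n : ℕ} (E J R ΔE ΔJ ΔR : Matrix (Fin n) (Fin n) ℂ)
    (hJ : Jᴴ = -J) (hEp : (E + ΔE).PosSemidef)
    (hΔJ : ΔJᴴ = -ΔJ)
    (hRp : (R + ΔR).PosSemidef)
    (ω : ℝ) (hM : Matrix.det ((Complex.I * ω) • E - J) ≠ 0) :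
    (Matrix.det ((Complex.I * ω) • (E + ΔE) - (J + ΔJ) + (R + ΔR)) = 0 ↔
      ∃ x : Fin n → ℂ, x ≠ 0 ∧ (R + ΔR) *ᵥ x = 0 ∧
        ((Complex.I * ω) • (E + ΔE) - (J + ΔJ)) *ᵥ x = 0) ∧
    ((∃ x : Fin n → ℂ, x ≠ 0 ∧ (R + ΔR) *ᵥ x = 0 ∧
        ((Complex.I * ω) • (E + ΔE) - (J + ΔJ)) *ᵥ x = 0) ↔
      ∃ vE vJ : Fin n → ℂ,
        (-(Complex.I * ω)) • vE + vJ ≠ 0 ∧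
        ΔR *ᵥ Mmat E J ω *ᵥ ((-(Complex.I * ω)) • vE + vJ) =
          -(R *ᵥ Mmat E J ω *ᵥ ((-(Complex.I * ω)) • vE + vJ)) ∧
        ΔE *ᵥ Mmat E J ω *ᵥ ((-(Complex.I * ω)) • vE + vJ) = vE ∧
        ΔJ *ᵥ Mmat E J ω *ᵥ ((-(Complex.I * ω)) • vE + vJ) = vJ) := by
  have hskew : ((Complex.I * ω) • (E + ΔE) - (J + ΔJ))ᴴ =
      -((Complex.I * ω) • (E + ΔE) - (J + ΔJ)) := by
    refine conjTranspose_I_mul_ofReal_smul_sub hEp.isHermitian ?_ ω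
    rw [conjTranspose_add, hJ, hΔJ, neg_add]
  exact ⟨det_add_eq_zero_iff_of_conjTranspose_eq_neg hskew hRp,
    exists_kernel_vector_iff_exists_structured _ E J R ΔE ΔJ ΔR hM.isUnit⟩

/-- Lemma on equivalent characterizations of `iω` being an eigenvalue of a
structurally perturbed dH pencil. -/
theorem dH_imaginary_eigenvalue_tfae {n : ℕ} (E J R ΔE ΔJ ΔR : Matrix (Fin n) (Fin n) ℂ)
    (hE : E.PosSemidef) (hJ : Jᴴ = -J) (hR : R.PosSemidef)
    (hΔE : ΔE.IsHermitian) (hEp : (E + ΔE).PosSemidef)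
    (hΔJ : ΔJᴴ = -ΔJ)
    (hΔR : ΔR.IsHermitian) (hRp : (R + ΔR).PosSemidef)
    (ω : ℝ) (hM : Matrix.det ((Complex.I * ω) • E - J) ≠ 0) :
    (Matrix.det ((Complex.I * ω) • (E + ΔE) - (J + ΔJ) + (R + ΔR)) = 0 ↔
      ∃ x : Fin n → ℂ, x ≠ 0 ∧ (R + ΔR) *ᵥ x = 0 ∧
        ((Complex.I * ω) • (E + ΔE) - (J + ΔJ)) *ᵥ x = 0) ∧
    ((∃ x : Fin n → ℂ, x ≠ 0 ∧ (R + ΔR) *ᵥ x = 0 ∧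
        ((Complex.I * ω) • (E + ΔE) - (J + ΔJ)) *ᵥ x = 0) ↔
      ∃ vE vJ : Fin n → ℂ,
        (-(Complex.I * ω)) • vE + vJ ≠ 0 ∧
        ΔR *ᵥ Mmat E J ω *ᵥ ((-(Complex.I * ω)) • vE + vJ) =
          -(R *ᵥ Mmat E J ω *ᵥ ((-(Complex.I * ω)) • vE + vJ)) ∧
        ΔE *ᵥ Mmat E J ω *ᵥ ((-(Complex.I * ω)) • vE + vJ) = vE ∧
        ΔJ *ᵥ Mmat E J ω *ᵥ ((-(Complex.I * ω)) • vE + vJ) = vJ) :=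
  dH_imaginary_eigenvalue_tfae_general E J R ΔE ΔJ ΔR hJ hEp hΔJ hRp ω hM
end
end

section
/- Let (E,J,R) be a dH triple. Then the pencil λE − (J − R) is regular, i.e. there exists λ ∈ ℂ with det(λE − (J − R)) ≠ 0, if and only if ker E ∩ ker J ∩ ker R = {0}, i.e. there is no nonzero x ∈ ℂⁿ with Ex = 0, Jx = 0, and Rx = 0. -/
open Matrix
open scoped ComplexOrder

/-!
If `(λE - (J - R)) x = 0`, then `x* (E + R) x = x* J x`. The left side is a nonnegative real,
the right side is purely imaginary since `J` is skew-Hermitian, so both vanish; positive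
semidefiniteness then gives `Ex = Rx = 0`, and hence `Jx = 0`. So a singular pencil (already its
value at `λ = 1`) has a kernel vector common to `E`, `J` and `R`, and conversely such a vector
lies in the kernel of every `λE - (J - R)`.
-/

namespace Matrix

variable {m 𝕜 : Type*} [Fintype m] [RCLike 𝕜]

theorem re_dotProduct_mulVec_eq_zero_of_conjTranspose_eq_neg {J : Matrix m m 𝕜} (hJ : Jᴴ = -J)
    (x : m → 𝕜) : RCLike.re (star x ⬝ᵥ J *ᵥ x) = 0 := by
  have hconj : star (star x ⬝ᵥ J *ᵥ x) = -(star x ⬝ᵥ J *ᵥ x) := by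
    conv_lhs =>
      rw [star_dotProduct, star_star, star_mulVec, ← dotProduct_mulVec, hJ, neg_mulVec,
        dotProduct_neg]
  have hre := congrArg RCLike.re hconj
  rw [RCLike.star_def, RCLike.conj_re, map_neg] at hre
  linarith

theorem PosSemidef.dotProduct_mulVec_eq_zero_of_re_eq_zero {A : Matrix m m 𝕜} (hA : A.PosSemidef)
    {x : m → 𝕜} (hre : RCLike.re (star x ⬝ᵥ A *ᵥ x) = 0) : star x ⬝ᵥ A *ᵥ x = 0 := by
  have him := (RCLike.nonneg_iff.mp (hA.dotProduct_mulVec_nonneg x)).2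
  exact RCLike.ext (by simpa using hre) (by simpa using him)

theorem PosSemidef.mulVec_eq_zero_of_mulVec_eq_of_conjTranspose_eq_neg {A J : Matrix m m 𝕜}
    (hA : A.PosSemidef) (hJ : Jᴴ = -J) {x : m → 𝕜} (hAJ : A *ᵥ x = J *ᵥ x) : A *ᵥ x = 0 := by
  refine (hA.dotProduct_mulVec_zero_iff x).mp (hA.dotProduct_mulVec_eq_zero_of_re_eq_zero ?_)
  rw [hAJ]
  exact re_dotProduct_mulVec_eq_zero_of_conjTranspose_eq_neg hJ x

theorem mulVec_eq_zero_of_sub_sub_mulVec_eq_zero {E J R : Matrix m m 𝕜} (hE : E.PosSemidef)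
    (hJ : Jᴴ = -J) (hR : R.PosSemidef) {x : m → 𝕜} (hx : (E - (J - R)) *ᵥ x = 0) :
    E *ᵥ x = 0 ∧ J *ᵥ x = 0 ∧ R *ᵥ x = 0 := by
  have hEJR : (E + R) *ᵥ x = J *ᵥ x := by
    rw [sub_sub_eq_add_sub, sub_mulVec, sub_eq_zero] at hx
    exact hx
  have hER : (E + R) *ᵥ x = 0 :=
    (hE.add hR).mulVec_eq_zero_of_mulVec_eq_of_conjTranspose_eq_neg hJ hEJR
  have hquad : star x ⬝ᵥ E *ᵥ x + star x ⬝ᵥ R *ᵥ x = 0 := by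
    rw [← dotProduct_add, ← add_mulVec, hER, dotProduct_zero]
  obtain ⟨hxEx, hxRx⟩ := (add_eq_zero_iff_of_nonneg (hE.dotProduct_mulVec_nonneg x)
    (hR.dotProduct_mulVec_nonneg x)).mp hquad
  have hEx := (hE.dotProduct_mulVec_zero_iff x).mp hxEx
  have hRx := (hR.dotProduct_mulVec_zero_iff x).mp hxRx
  refine ⟨hEx, ?_, hRx⟩
  rw [← hEJR, add_mulVec, hEx, hRx, add_zero]

end Matrix

/-- A dH pencil `λE − (J − R)` is regular iff `ker E ∩ ker J ∩ ker R = {0}`. -/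
theorem dH_pencil_regular_iff {n : ℕ} (E J R : Matrix (Fin n) (Fin n) ℂ)
    (hE : E.PosSemidef) (hJ : Jᴴ = -J) (hR : R.PosSemidef) :
    (∃ lam : ℂ, Matrix.det (lam • E - (J - R)) ≠ 0) ↔
    ¬ ∃ x : Fin n → ℂ, x ≠ 0 ∧ E *ᵥ x = 0 ∧ J *ᵥ x = 0 ∧ R *ᵥ x = 0 := by
  constructor
  · rintro ⟨lam, hdet⟩ ⟨x, hx, hEx, hJx, hRx⟩
    refine hdet (exists_mulVec_eq_zero_iff.mp ⟨x, hx, ?_⟩)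
    simp [sub_mulVec, smul_mulVec, hEx, hJx, hRx]
  · intro hker
    refine ⟨1, fun hdet => hker ?_⟩
    obtain ⟨x, hx, hMx⟩ := exists_mulVec_eq_zero_iff.mpr hdet
    rw [one_smul] at hMx
    exact ⟨x, hx, mulVec_eq_zero_of_sub_sub_mulVec_eq_zero hE hJ hR hMx⟩
end

section
/- Let (E,J,R) be a dH triple with R Hermitian positive definite. Then for every λ ∈ ℂ with Re(λ) ≥ 0 one has det(λE − (J − R)) ≠ 0. In particular the pencil λE − (J − R) is regular, J − R is invertible, and the pencil has no eigenvalues on the imaginary axis or in the closed right half-plane. -/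
/-! For `v ≠ 0` the real part of `v* (λE - (J - R)) v` is `Re λ · v*Ev + v*Rv > 0`, because
`v*Jv` is purely imaginary for skew-Hermitian `J`; hence `λE - (J - R)` has trivial kernel. -/

open Matrix
open scoped ComplexOrder

namespace Matrix

variable {ι : Type*} [Fintype ι]

theorem star_star_dotProduct_mulVec (A : Matrix ι ι ℂ) (v : ι → ℂ) :
    star (star v ⬝ᵥ A *ᵥ v) = star v ⬝ᵥ Aᴴ *ᵥ v := by
  rw [star_dotProduct, star_mulVec, star_star, dotProduct_comm, dotProduct_mulVec,
    dotProduct_comm]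

theorem re_star_dotProduct_mulVec_eq_zero_of_conjTranspose_eq_neg_s7 {J : Matrix ι ι ℂ}
    (hJ : Jᴴ = -J) (v : ι → ℂ) : (star v ⬝ᵥ J *ᵥ v).re = 0 := by
  have h := congrArg Complex.re (star_star_dotProduct_mulVec J v)
  rw [hJ, neg_mulVec, dotProduct_neg, Complex.star_def, Complex.conj_re, Complex.neg_re] at h
  linarith

theorem det_ne_zero_of_re_star_dotProduct_mulVec_pos [DecidableEq ι] {A : Matrix ι ι ℂ}
    (hA : ∀ v ≠ 0, 0 < (star v ⬝ᵥ A *ᵥ v).re) : A.det ≠ 0 := by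
  intro hdet
  obtain ⟨v, hv, hAv⟩ := exists_mulVec_eq_zero_iff.mpr hdet
  simpa [hAv] using hA v hv

theorem re_star_dotProduct_dHPencil_pos {E J R : Matrix ι ι ℂ} (hE : E.PosSemidef)
    (hJ : Jᴴ = -J) (hR : R.PosDef) {lam : ℂ} (hlam : 0 ≤ lam.re) {v : ι → ℂ} (hv : v ≠ 0) :
    0 < (star v ⬝ᵥ (lam • E - (J - R)) *ᵥ v).re := by
  obtain ⟨hEre, hEim⟩ := Complex.nonneg_iff.mp (hE.dotProduct_mulVec_nonneg v)
  have hRre := (Complex.pos_iff.mp (hR.dotProduct_mulVec_pos hv)).1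
  have hJre := re_star_dotProduct_mulVec_eq_zero_of_conjTranspose_eq_neg_s7 hJ v
  have hEterm : 0 ≤ (lam * (star v ⬝ᵥ E *ᵥ v)).re := by
    rw [Complex.mul_re, ← hEim, mul_zero, sub_zero]
    exact mul_nonneg hlam hEre
  rw [sub_mulVec, sub_mulVec, smul_mulVec, dotProduct_sub, dotProduct_sub, dotProduct_smul,
    smul_eq_mul, Complex.sub_re, Complex.sub_re, hJre]
  linarith

end Matrix

/-- If `(E, J, R)` is a dH triple with `R` positive definite, then
`det(λE − (J − R)) ≠ 0` for all `λ` with `Re λ ≥ 0`; in particular the pencil is regular,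
`J − R` is invertible, and there are no eigenvalues in the closed right half-plane. -/
theorem dH_posdef_R_stable {n : ℕ} (E J R : Matrix (Fin n) (Fin n) ℂ)
    (hE : E.PosSemidef) (hJ : Jᴴ = -J) (hR : R.PosDef) :
    (∀ lam : ℂ, 0 ≤ lam.re → Matrix.det (lam • E - (J - R)) ≠ 0) ∧
    (∃ μ : ℂ, Matrix.det (μ • E - (J - R)) ≠ 0) ∧
    IsUnit (J - R) := by
  have stable : ∀ lam : ℂ, 0 ≤ lam.re → Matrix.det (lam • E - (J - R)) ≠ 0 := fun lam hlam =>
    det_ne_zero_of_re_star_dotProduct_mulVec_pos fun _ hv =>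
      re_star_dotProduct_dHPencil_pos hE hJ hR hlam hv
  have hdet0 : (J - R).det ≠ 0 := by
    have h := stable 0 le_rfl
    rw [zero_smul, zero_sub, det_neg] at h
    exact right_ne_zero_of_mul h
  exact ⟨stable, ⟨0, stable 0 le_rfl⟩, (isUnit_iff_isUnit_det _).mpr hdet0.isUnit⟩
end
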